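/- arXiv:1309.2772 — 7 statements merged into one kernel-verified Lean document; each statement's English description precedes it below -/
import Mathlib

section
/- If a splitter object guarantees that at most one process wins, and a process p wins the splitter and subsequently commits a value u into the decision register d before any process sets the conflict flag c, then every other process that completes its invocation must adopt the value u; hence no two processes commit different values (coherence of the grafarius). -/
theorem le_of_eq_true_of_forall_lt_eq_false {c : ℕ → Bool} {t₀ t : ℕ}
    (hc : ∀ s, s < t₀ → c s = false) (ht : c t = true) : t₀ ≤ t := by
  by_contra! h
  simp [hc t h] at ht

theorem read_eq_some_of_flag_set {V : Type} {d : ℕ → Option V} {c : ℕ → Bool} {u : V}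
    {tw t₀ ts tr : ℕ} (hd : ∀ t, tw ≤ t → d t = some u) (horder : tw < t₀)
    (hc : ∀ t, t < t₀ → c t = false) (hset : c ts = true) (hread : ts < tr) :
    d tr = some u :=
  hd tr (by have := le_of_eq_true_of_forall_lt_eq_false hc hset; omega)

theorem stmt1_general {P V : Type} (p : P) (u : V)
    (win completes : P → Prop)
    (d : ℕ → Option V) (c : ℕ → Bool)
    (commits adopts : P → V → Prop)
    (tw t0 : ℕ) (ts tr : P → ℕ)
    -- p writes u to d at time tw and d keeps this value afterwards
    (hd : ∀ t, tw ≤ t → d t = some u)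
    -- only the unique winner p ever writes to d, and it writes u
    (hdval : ∀ t v, d t = some v → v = u)
    -- p commits u at time t0 > tw, before any process sets the conflict flag
    (horder : tw < t0)
    (hc : ∀ t, t < t0 → c t = false)
    -- every other completing process loses the splitter: it sets c at time
    -- (ts q), then reads d at time (tr q) and adopts the value it reads
    (hlose : ∀ q, q ≠ p → completes q →
      c (ts q) = true ∧ ts q < tr q ∧ ∀ v, d (tr q) = some v → adopts q v)
    -- only a winner commits, and any committed value was written to d
    (hcommitwin : ∀ q v, commits q v → win q ∧ ∃ t, d t = some v) :
    (∀ q, q ≠ p → completes q → adopts q u) ∧ (∀ q v, commits q v → v = u) := by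
  refine ⟨fun q hq hcomplete => ?_, fun q v hcommit => ?_⟩
  · obtain ⟨hset, hread, hadopt⟩ := hlose q hq hcomplete
    exact hadopt u (read_eq_some_of_flag_set hd horder hc hset hread)
  · obtain ⟨-, t, ht⟩ := hcommitwin q v hcommit
    exact hdval t v ht

/-- Coherence of the grafarius: if the splitter has at most one winner, and the
winner `p` commits `u` into the decision register `d` before any process sets
the conflict flag `c`, then every other completing process adopts `u`, and no
two processes commit different values. -/
theorem stmt1 {P V : Type} (p : P) (u : V)
    (win completes : P → Prop)
    (d : ℕ → Option V) (c : ℕ → Bool)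
    (commits adopts : P → V → Prop)
    (tw t0 : ℕ) (ts tr : P → ℕ)
    -- at most one process wins the splitter
    (hwin1 : ∀ q q', win q → win q' → q = q')
    (hwp : win p)
    -- p writes u to d at time tw and d keeps this value afterwards
    (hd : ∀ t, tw ≤ t → d t = some u)
    -- only the unique winner p ever writes to d, and it writes u
    (hdval : ∀ t v, d t = some v → v = u)
    -- p commits u at time t0 > tw, before any process sets the conflict flag
    (horder : tw < t0)
    (hc : ∀ t, t < t0 → c t = false)
    (hcommitp : commits p u)
    -- every other completing process loses the splitter: it sets c at time
    -- (ts q), then reads d at time (tr q) and adopts the value it reads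
    (hlose : ∀ q, q ≠ p → completes q →
      c (ts q) = true ∧ ts q < tr q ∧ ∀ v, d (tr q) = some v → adopts q v)
    -- only a winner commits, and any committed value was written to d
    (hcommitwin : ∀ q v, commits q v → win q ∧ ∃ t, d t = some v) :
    (∀ q, q ≠ p → completes q → adopts q u) ∧ (∀ q v, commits q v → v = u) :=
  stmt1_general p u win completes d c commits adopts tw t0 ts tr hd hdval horder hc hlose hcommitwin
end

section
/- The racing-based consensus algorithm satisfies validity: any decided value was proposed by some process. -/
theorem exists_input_eq_of_returned {ι P V : Type*} [LT ι] [WellFoundedLT ι] (input : P → V)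
    (proposed returned : ι → V → Prop)
    (hprop : ∀ k v, proposed k v → (∃ p, input p = v) ∨ ∃ j, j < k ∧ returned j v)
    (hret : ∀ k v, returned k v → proposed k v) (k : ι) :
    ∀ v, returned k v → ∃ p, input p = v := by
  induction k using WellFoundedLT.induction with
  | _ k ih =>
    intro v hv
    rcases hprop k v (hret k v hv) with hinput | ⟨j, hjk, hj⟩
    · exact hinput
    · exact ih j hjk v hj

/-- Validity of the racing-based consensus: any decided value was proposed
(i.e., is the input of some process). -/
theorem stmt6 {P V : Type} (input : P → V)
    (proposed returned : ℕ → V → Prop) (decided : V → Prop)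
    -- a process proposes either its input or a value returned from an
    -- earlier grafarius in the racing order
    (hprop : ∀ k v, proposed k v → (∃ p, input p = v) ∨ ∃ j, j < k ∧ returned j v)
    -- grafarius validity: any returned value was proposed to that grafarius
    (hret : ∀ k v, returned k v → proposed k v)
    -- a decided value is returned (committed) at some grafarius
    (hdec : ∀ v, decided v → ∃ k, returned k v) :
    ∀ v, decided v → ∃ p, input p = v := by
  intro v hv
  obtain ⟨k, hk⟩ := hdec v hv
  exact exists_input_eq_of_returned input proposed returned hprop hret k v hk
end

section
/- In the universal construction, the linearization obtained by ordering operations according to their associated consensus objects (trivial operations placed after the regular one of the same consensus, preserving order among trivial ones) extends the real-time precedence order of the original history. -/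
/-- If `c' ≪ assoc op`, then `op` saw `c'` decided at its witness time; decisions are stable, so
every later operation associated with `c'` would find it decided, contradicting (a). -/
theorem not_rel_assoc_of_resp_lt_inv {Op C T : Type} [Preorder T] {assoc : Op → C}
    {r : C → C → Prop} {inv resp witness : Op → T} {decidedAt : C → T → Prop}
    (hint : ∀ op, inv op ≤ witness op ∧ witness op ≤ resp op)
    (hwit : ∀ op, ¬ decidedAt (assoc op) (witness op))
    (hmono : ∀ c t t', decidedAt c t → t ≤ t' → decidedAt c t')
    (hsmaller : ∀ op c, r c (assoc op) → decidedAt c (witness op))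
    {op op' : Op} (h : resp op < inv op') : ¬ r (assoc op') (assoc op) := fun hr =>
  have hwitness : witness op ≤ witness op' :=
    ((hint op).2.trans_lt h).le.trans (hint op').1
  hwit op' (hmono _ _ _ (hsmaller op _ hr) hwitness)

/-- The linearization of the universal construction (ordering operations by
their associated consensus in the racing order r, with trivial operations
after the regular one of the same consensus, and trivial operations of the
same consensus kept in real-time order) extends the real-time precedence
order: resp op < inv op' implies op precedes op' in the linearization. -/
theorem stmt9 {Op C : Type} (assoc : Op → C) (r : C → C → Prop)
    (regular : Op → Prop) (inv resp witness : Op → ℕ)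
    (decidedAt : C → ℕ → Prop)
    -- r is a (strict) total order on the consensus objects
    (htri : ∀ c c', c = c' ∨ r c c' ∨ r c' c)
    -- (a) each operation witnesses, within its interval, a time at which its
    -- associated consensus is undecided
    (hint : ∀ op, inv op ≤ witness op ∧ witness op ≤ resp op)
    (hwit : ∀ op, ¬ decidedAt (assoc op) (witness op))
    -- decisions are stable
    (hmono : ∀ c t t', decidedAt c t → t ≤ t' → decidedAt c t')
    -- (b) racing proposition: when an operation runs on its consensus, all
    -- r-smaller consensus objects are decided
    (hsmaller : ∀ op c, r c (assoc op) → decidedAt c (witness op))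
    -- at most one regular operation per consensus
    (huniq : ∀ op op', regular op → regular op' → assoc op = assoc op' → op = op')
    -- (c) a trivial operation cannot real-time-precede the regular operation
    -- of the same consensus
    (hc : ∀ op op', assoc op = assoc op' → ¬ regular op → regular op' →
      ¬ resp op < inv op') :
    ∀ op op', resp op < inv op' →
      (r (assoc op) (assoc op') ∨
       (assoc op = assoc op' ∧
         ((regular op ∧ ¬ regular op') ∨
          (¬ regular op ∧ ¬ regular op' ∧ resp op < inv op')))) := by
  intro op op' h
  rcases htri (assoc op) (assoc op') with heq | hr | hr
  · refine Or.inr ⟨heq, ?_⟩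
    by_cases hreg : regular op
    · refine Or.inl ⟨hreg, fun hreg' => ?_⟩
      obtain rfl := huniq op op' hreg hreg' heq
      exact h.not_ge ((hint op).1.trans (hint op).2)
    · exact Or.inr ⟨hreg, fun hreg' => hc op op' heq hreg hreg' h, h⟩
  · exact Or.inl hr
  · exact absurd hr (not_rel_assoc_of_resp_lt_inv hint hwit hmono hsmaller h)
end

section
/- The linearization of the universal construction is legal: each operation's response equals the result of applying the sequential specification to the state obtained by applying, in linearization order, all preceding regular operations. -/
/-! The states decided by consecutive consensus objects obey the same recursion as the sequential
execution of the regular operations in linearization order, so the two agree up to consensus `m`.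
Each response is then read off the consensus decision: a regular operation's from the step it
decided, a trivial operation's from the state it read. -/

theorem eq_of_le_of_same_recurrence {α : Type*} (F : ℕ → α → α) {f g : ℕ → α} {m : ℕ}
    (h0 : f 0 = g 0) (hf : ∀ j < m, f (j + 1) = F j (f j))
    (hg : ∀ j < m, g (j + 1) = F j (g j)) : ∀ j ≤ m, f j = g j := by
  intro j
  induction j with
  | zero => exact fun _ => h0
  | succ k ih =>
    intro hk
    rw [hf k hk, hg k hk, ih (Nat.le_of_succ_le hk)]

/- Consensus objects are indexed `1..m` in the racing order; `s j` is the state decided at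
consensus `j` and `reg j` is the unique regular operation of consensus `j`. -/
theorem stmt10_general {S OpT V : Type} (τ : S → OpT → S × V) (s0 : S)
    {n : ℕ} (cons : Fin n → ℕ) (typ : Fin n → OpT) (res : Fin n → V)
    (regular : Fin n → Prop)
    (s : ℕ → S) (m : ℕ)
    (hcons : ∀ i, 1 ≤ cons i ∧ cons i ≤ m)
    (hs0 : s 0 = s0)
    (reg : ℕ → Fin n)
    -- each used consensus has exactly one regular operation
    (hregOk : ∀ j, 1 ≤ j → j ≤ m → regular (reg j) ∧ cons (reg j) = j)
    -- a regular operation decides τ applied to the state of the previous consensus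
    (hreg : ∀ i, regular i → (s (cons i), res i) = τ (s (cons i - 1)) (typ i))
    -- a trivial operation reads the decided state and leaves it unchanged
    (htriv : ∀ i, ¬ regular i → τ (s (cons i)) (typ i) = (s (cons i), res i)) :
    ∀ applyAll : ℕ → S, applyAll 0 = s0 →
      -- applyAll j : the state resulting from applying, in linearization
      -- order, the regular operations of the first j consensus objects
      (∀ j, j < m → applyAll (j + 1) = (τ (applyAll j) (typ (reg (j + 1)))).1) →
      ∀ i : Fin n,
        -- a regular operation's response: τ applied to the state of all
        -- regular operations preceding it in the linearization
        (regular i → res i = (τ (applyAll (cons i - 1)) (typ i)).2) ∧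
        -- a trivial operation's response: τ applied to the state including
        -- the regular operation of its own consensus
        (¬ regular i → res i = (τ (applyAll (cons i)) (typ i)).2) := by
  intro applyAll h0 hstep i
  have hdecided : ∀ j < m, s (j + 1) = (τ (s j) (typ (reg (j + 1)))).1 := by
    intro j hj
    obtain ⟨hregular, hcons_reg⟩ := hregOk (j + 1) j.succ_pos hj
    have h := hreg _ hregular
    rw [hcons_reg, Nat.add_sub_cancel] at h
    rw [← h]
  have hagree := eq_of_le_of_same_recurrence (fun j t => (τ t (typ (reg (j + 1)))).1)
    (h0.trans hs0.symm) hstep hdecided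
  refine ⟨fun hregular => ?_, fun htrivial => ?_⟩
  · rw [hagree _ ((cons i).sub_le 1 |>.trans (hcons i).2), ← hreg i hregular]
  · rw [hagree _ (hcons i).2, htriv i htrivial]

/-- Legality of the linearization of the universal construction: every
operation's response equals the result of applying the sequential
specification τ to the state obtained by applying, in linearization order,
all the regular operations preceding it. Consensus objects are indexed
1..m in the racing order; `s j` is the state decided at consensus j;
`reg j` is the unique regular operation of consensus j. -/
theorem stmt10 {S OpT V : Type} (τ : S → OpT → S × V) (s0 : S)
    {n : ℕ} (cons : Fin n → ℕ) (typ : Fin n → OpT) (res : Fin n → V)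
    (regular : Fin n → Prop)
    (s : ℕ → S) (m : ℕ)
    (hcons : ∀ i, 1 ≤ cons i ∧ cons i ≤ m)
    (hs0 : s 0 = s0)
    (reg : ℕ → Fin n)
    -- each used consensus has exactly one regular operation
    (hregOk : ∀ j, 1 ≤ j → j ≤ m → regular (reg j) ∧ cons (reg j) = j)
    (hregUniq : ∀ i, regular i → i = reg (cons i))
    -- a regular operation decides τ applied to the state of the previous consensus
    (hreg : ∀ i, regular i → (s (cons i), res i) = τ (s (cons i - 1)) (typ i))
    -- a trivial operation reads the decided state and leaves it unchanged
    (htriv : ∀ i, ¬ regular i → τ (s (cons i)) (typ i) = (s (cons i), res i)) :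
    ∀ applyAll : ℕ → S, applyAll 0 = s0 →
      -- applyAll j : the state resulting from applying, in linearization
      -- order, the regular operations of the first j consensus objects
      (∀ j, j < m → applyAll (j + 1) = (τ (applyAll j) (typ (reg (j + 1)))).1) →
      ∀ i : Fin n,
        -- a regular operation's response: τ applied to the state of all
        -- regular operations preceding it in the linearization
        (regular i → res i = (τ (applyAll (cons i - 1)) (typ i)).2) ∧
        -- a trivial operation's response: τ applied to the state including
        -- the regular operation of its own consensus
        (¬ regular i → res i = (τ (applyAll (cons i)) (typ i)).2) :=
  stmt10_general τ s0 cons typ res regular s m hcons hs0 reg hregOk hreg htriv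
end

section
/- For a recycled object satisfying invariant P1, every observer operation has a unique associated modifier: the modifier that wrote the decision value the observer reads, and this modifier is concurrent with or precedes the observer with no other modifier strictly between them in real time. -/
/-!
The observer reads the value of the latest write to `d` before its read, so its associated
modifier is the modifier whose write time is greatest among those preceding the read; it
exists because the observer reads a non-⊥ value and write times are bounded by the read
time, and it is unique because distinct writes happen at distinct times. Since a modifier
writes during its own execution, it cannot start after the observer's read, and a modifier
lying strictly between it and the observer would have written later but still before the
read, contradicting maximality.
-/

section LatestWrite

variable {Op T : Type*}

def IsLatestWriteBefore [Preorder T] (isMod : Op → Prop) (wt : Op → T) (rt : T) (m : Op) :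
    Prop :=
  isMod m ∧ wt m < rt ∧ ∀ m', isMod m' → wt m' < rt → wt m' ≤ wt m

theorem exists_isLatestWriteBefore {isMod : Op → Prop} {wt : Op → ℕ} {rt : ℕ}
    (h : ∃ m, isMod m ∧ wt m < rt) : ∃ m, IsLatestWriteBefore isMod wt rt m := by
  set S := wt '' {m | isMod m ∧ wt m < rt}
  have hbdd : BddAbove S := ⟨rt, by rintro _ ⟨m, ⟨-, hlt⟩, rfl⟩; exact hlt.le⟩
  obtain ⟨_, ⟨m, ⟨hm, hlt⟩, rfl⟩, hgreatest⟩ :=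
    hbdd.exists_isGreatest_of_nonempty (Set.Nonempty.image wt h)
  exact ⟨m, hm, hlt, fun m' hm' hlt' => hgreatest ⟨m', ⟨hm', hlt'⟩, rfl⟩⟩

variable [PartialOrder T] {isMod : Op → Prop} {wt : Op → T} {rt : T} {m m' : Op}

theorem IsLatestWriteBefore.eq
    (hinj : ∀ m m', isMod m → isMod m' → wt m = wt m' → m = m')
    (hm : IsLatestWriteBefore isMod wt rt m) (hm' : IsLatestWriteBefore isMod wt rt m') :
    m = m' :=
  hinj m m' hm.1 hm'.1 <| le_antisymm (hm'.2.2 m hm.1 hm.2.1) (hm.2.2 m' hm'.1 hm'.2.1)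

end LatestWrite

section RealTime

variable {Op T : Type*} [LinearOrder T] {isMod : Op → Prop} {inv resp wt : Op → T}
  {o m : Op} {rt : T}

theorem IsLatestWriteBefore.not_resp_lt_inv (hm : IsLatestWriteBefore isMod wt rt m)
    (hinv : inv m ≤ wt m) (hrt : rt ≤ resp o) : ¬ resp o < inv m :=
  not_lt.2 <| hinv.trans <| hm.2.1.le.trans hrt

theorem IsLatestWriteBefore.not_exists_between (hm : IsLatestWriteBefore isMod wt rt m)
    (hwt : ∀ m, isMod m → inv m ≤ wt m ∧ wt m ≤ resp m) (hrt : inv o ≤ rt) :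
    ¬ ∃ m'', isMod m'' ∧ resp m < inv m'' ∧ resp m'' < inv o := by
  rintro ⟨m'', hm'', hafter, hbefore⟩
  have hlater : wt m < wt m'' :=
    (hwt m hm.1).2.trans_lt <| hafter.trans_le (hwt m'' hm'').1
  have hread : wt m'' < rt := (hwt m'' hm'').2.trans_lt <| hbefore.trans_le hrt
  exact (hm.2.2 m'' hm'' hread).not_gt hlater

end RealTime

theorem stmt11_general {Op : Type} (isMod : Op → Prop)
    (inv resp : Op → ℕ) (wt : Op → ℕ)    -- modifiers write to d at time wt
    (o : Op) (rt : ℕ)                    -- the observer o reads d at time rt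
    (hwt : ∀ m, isMod m → inv m ≤ wt m ∧ wt m ≤ resp m)
    (hrt : inv o ≤ rt ∧ rt ≤ resp o)
    -- writes to the atomic register occur at distinct times
    (hwtinj : ∀ m m', isMod m → isMod m' → wt m = wt m' → m = m')
    -- the observer reads a non-⊥ value: some write precedes its read
    (hsome : ∃ m, isMod m ∧ wt m < rt) :
    ∃! m, isMod m ∧ wt m < rt ∧
      -- (i) o reads the decision written by m (latest write before the read)
      (∀ m', isMod m' → wt m' < rt → wt m' ≤ wt m) ∧
      -- (ii) m is concurrent with or prior to o
      ¬ resp o < inv m ∧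
      -- (iii) no modifier lies strictly between m and o in real time
      ¬ ∃ m'', isMod m'' ∧ resp m < inv m'' ∧ resp m'' < inv o := by
  obtain ⟨m, hm⟩ := exists_isLatestWriteBefore hsome
  refine ⟨m, ⟨hm.1, hm.2.1, hm.2.2, hm.not_resp_lt_inv (hwt m hm.1).1 hrt.2,
    hm.not_exists_between hwt hrt.1⟩, ?_⟩
  rintro m' ⟨hm', hlt', hmax', -, -⟩
  exact IsLatestWriteBefore.eq hwtinj ⟨hm', hlt', hmax'⟩ hm

/-- Under invariant P1, every observer of a recycled object has a unique
associated modifier: the modifier whose write (the latest write to the atomic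
decision register before the observer's read) it observes; this modifier is
concurrent with or prior to the observer, and no other modifier lies strictly
between them in real time. -/
theorem stmt11 {Op : Type} (isMod : Op → Prop)
    (inv resp : Op → ℕ) (wt : Op → ℕ)    -- modifiers write to d at time wt
    (o : Op) (rt : ℕ)                    -- the observer o reads d at time rt
    (hint : ∀ a, inv a ≤ resp a)
    (hwt : ∀ m, isMod m → inv m ≤ wt m ∧ wt m ≤ resp m)
    (hrt : inv o ≤ rt ∧ rt ≤ resp o)
    -- writes to the atomic register occur at distinct times
    (hwtinj : ∀ m m', isMod m → isMod m' → wt m = wt m' → m = m')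
    -- the observer reads a non-⊥ value: some write precedes its read
    (hsome : ∃ m, isMod m ∧ wt m < rt) :
    ∃! m, isMod m ∧ wt m < rt ∧
      -- (i) o reads the decision written by m (latest write before the read)
      (∀ m', isMod m' → wt m' < rt → wt m' ≤ wt m) ∧
      -- (ii) m is concurrent with or prior to o
      ¬ resp o < inv m ∧
      -- (iii) no modifier lies strictly between m and o in real time
      ¬ ∃ m'', isMod m'' ∧ resp m < inv m'' ∧ resp m'' < inv o :=
  stmt11_general isMod inv resp wt o rt hwt hrt hwtinj hsome
end

section
/- Under invariant P1, the history of a recycled object decomposes into consecutive non-interleaving rounds: grouping each modifier with timestamp t and the observers it serves yields sub-histories r_{t1}, …, r_{tm} (timestamps increasing) whose concatenation equals the linearization, i.e., any operation of round t entirely precedes any operation of round t' > t in the linearization. -/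
/-!
An observer is sandwiched between its associated modifier and the next write to the decision
register, so every operation of round `t` happens strictly before the write of a modifier `m`
whose own write comes after round `t`'s modifier. Since a modifier of a larger timestamp writes
later, and every operation of its round occurs no earlier than that write, the rounds do not
interleave.
-/

section Rounds

variable {Op : Type} (isMod : Op → Prop) (time : Op → ℕ) (assoc : Op → Op)

theorem time_assoc_le (hself : ∀ m, isMod m → assoc m = m)
    (hobs : ∀ a, ¬ isMod a → time (assoc a) < time a ∧
      ∀ m, isMod m → time m < time a → time m ≤ time (assoc a)) (a : Op) :
    time (assoc a) ≤ time a := by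
  by_cases ha : isMod a
  · rw [hself a ha]
  · exact (hobs a ha).1.le

theorem time_lt_of_time_assoc_lt (hself : ∀ m, isMod m → assoc m = m)
    (htimeInj : ∀ a b, time a = time b → a = b)
    (hobs : ∀ a, ¬ isMod a → time (assoc a) < time a ∧
      ∀ m, isMod m → time m < time a → time m ≤ time (assoc a))
    {a m : Op} (hm : isMod m) (hlt : time (assoc a) < time m) :
    time a < time m := by
  by_cases ha : isMod a
  · rwa [hself a ha] at hlt
  · refine lt_of_le_of_ne (not_lt.mp fun hma => ?_) fun heq => ?_
    · exact hlt.not_ge ((hobs a ha).2 m hm hma)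
    · exact ha (htimeInj a m heq ▸ hm)

end Rounds

/-- Round decomposition of a recycled object's history: grouping each modifier
of timestamp t with the observers it serves, operations of round t entirely
precede operations of round t' > t in the linearization (which orders each
operation by its atomic access `time` to the decision register). `assoc a` is
the associated modifier of a (itself, for a modifier). -/
theorem stmt13 {Op : Type} (isMod : Op → Prop) (time : Op → ℕ) (ts : Op → ℕ)
    (assoc : Op → Op)
    (hassocMod : ∀ a, isMod (assoc a))
    (hself : ∀ m, isMod m → assoc m = m)
    -- atomic accesses occur at distinct times
    (htimeInj : ∀ a b, time a = time b → a = b)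
    -- modifiers of smaller timestamp write earlier (previous claim)
    (hmodOrder : ∀ m m', isMod m → isMod m' → ts m < ts m' → time m < time m')
    -- an observer reads after its associated modifier's write and before any
    -- later modifier's write (it reads the latest write)
    (hobs : ∀ a, ¬ isMod a → time (assoc a) < time a ∧
      ∀ m, isMod m → time m < time a → time m ≤ time (assoc a)) :
    ∀ a b, ts (assoc a) < ts (assoc b) → time a < time b := by
  intro a b hts
  have hwrites : time (assoc a) < time (assoc b) :=
    hmodOrder _ _ (hassocMod a) (hassocMod b) hts
  calc time a < time (assoc b) :=
        time_lt_of_time_assoc_lt isMod time assoc hself htimeInj hobs (hassocMod b) hwrites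
    _ ≤ time b := time_assoc_le isMod time assoc hself hobs b
end

section
/- Given a strict total order ≪ on consensus objects and the property that whenever a process enters object c all objects ≪-smaller than c are decided, if two operations op (associated consensus c) and op' (associated consensus c') satisfy op <_h op' in real time, then c' ≪ c is impossible. -/
theorem stmt19_general {Op C : Type} (assoc : Op → C) (r : C → C → Prop)
    (inv resp witness : Op → ℕ) (decidedAt : C → ℕ → Prop)
    (hint : ∀ a, inv a ≤ witness a ∧ witness a ≤ resp a)
    -- each operation witnesses its consensus undecided during its interval
    (hwit : ∀ a, ¬ decidedAt (assoc a) (witness a))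
    -- decisions are monotone (stable)
    (hmono : ∀ c t t', decidedAt c t → t ≤ t' → decidedAt c t')
    -- entering an object requires all r-smaller objects to be decided
    (hsmaller : ∀ a c, r c (assoc a) → decidedAt c (witness a)) :
    ∀ op op', resp op < inv op' → ¬ r (assoc op') (assoc op) := by
  intro op op' hprec hbelow
  have hwitness_le : witness op ≤ witness op' :=
    (hint op).2.trans (hprec.le.trans (hint op').1)
  exact hwit op' (hmono _ _ _ (hsmaller op _ hbelow) hwitness_le)

/-- Given a strict total order r on consensus objects such that whenever a
process runs on an object all r-smaller objects are decided, and each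
operation witnesses its own associated consensus undecided at some time in
its interval (decisions being stable), if op real-time-precedes op' then
assoc op' ≪ assoc op is impossible. -/
theorem stmt19 {Op C : Type} (assoc : Op → C) (r : C → C → Prop)
    (hto : IsStrictTotalOrder C r)
    (inv resp witness : Op → ℕ) (decidedAt : C → ℕ → Prop)
    (hint : ∀ a, inv a ≤ witness a ∧ witness a ≤ resp a)
    -- each operation witnesses its consensus undecided during its interval
    (hwit : ∀ a, ¬ decidedAt (assoc a) (witness a))
    -- decisions are monotone (stable)
    (hmono : ∀ c t t', decidedAt c t → t ≤ t' → decidedAt c t')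
    -- entering an object requires all r-smaller objects to be decided
    (hsmaller : ∀ a c, r c (assoc a) → decidedAt c (witness a)) :
    ∀ op op', resp op < inv op' → ¬ r (assoc op') (assoc op) :=
  stmt19_general assoc r inv resp witness decidedAt hint hwit hmono hsmaller
end
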